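/- (Theorem 1 of the paper, discrete form.) In a γ-discounted finite MDP, let Q*(s,u) be the optimal action-value and suppose Q̃(s,u) = Q(s, u | z̃(s)) where: (i) |Q(s,u|z) - Q*(s,u)| ≤ κ whenever z = f(s) is the 'fresh' strategy, (ii) Q(s,u|·) is coordinate-wise η-Lipschitz over n strategy coordinates, and (iii) the used strategy z̃(s) satisfies ‖z̃^a(s) - f(s)^a‖ ≤ β for every coordinate a. Then the value Ṽ of the policy greedy with respect to Q̃ satisfies ‖V*(s) - Ṽ(s)‖_∞ ≤ 2(n·η·β + κ)/(1-γ). -/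

import Mathlib

/-!
Replacing the fresh strategies `f s` by the stale ones `z̃ s` one coordinate at a time changes
`Q` by at most `ηβ` per coordinate, so `Q̃` is within `ε = nηβ + κ` of `Q*`. For a policy greedy
with respect to an `ε`-accurate `Q̃`, the one-step loss `V* s - Q* s (π s)` lies in `[0, 2ε]`, and
`Q* s (π s) - Ṽ s = γ 𝔼[V* - Ṽ]`; hence `‖V* - Ṽ‖_∞ ≤ 2ε + γ ‖V* - Ṽ‖_∞`.
-/

open Finset Function

section CoordinatewiseLipschitz

variable {ι Z : Type*} [DecidableEq ι] [SeminormedAddGroup Z] {F : (ι → Z) → ℝ} {η : ℝ}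

theorem abs_sub_piecewise_le_sum_norm
    (hF : ∀ (z : ι → Z) (a : ι) (z₁ z₂ : Z),
      |F (update z a z₁) - F (update z a z₂)| ≤ η * ‖z₁ - z₂‖)
    (x y : ι → Z) (s : Finset ι) :
    |F (s.piecewise x y) - F y| ≤ η * ∑ a ∈ s, ‖x a - y a‖ := by
  induction s using Finset.induction_on with
  | empty => simp
  | insert a s ha ih =>
    have hstep : |F ((insert a s).piecewise x y) - F (s.piecewise x y)| ≤ η * ‖x a - y a‖ := by
      have hy : update (s.piecewise x y) a (y a) = s.piecewise x y := by
        rw [← s.piecewise_eq_of_notMem x y ha, update_eq_self]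
      rw [piecewise_insert, ← hy, update_idem]
      exact hF _ a _ _
    calc |F ((insert a s).piecewise x y) - F y|
        ≤ |F ((insert a s).piecewise x y) - F (s.piecewise x y)| + |F (s.piecewise x y) - F y| :=
          abs_sub_le _ _ _
      _ ≤ η * ‖x a - y a‖ + η * ∑ b ∈ s, ‖x b - y b‖ := add_le_add hstep ih
      _ = η * ∑ b ∈ insert a s, ‖x b - y b‖ := by rw [sum_insert ha, mul_add]

theorem abs_sub_le_mul_sum_norm_of_coordinatewise [Fintype ι]
    (hF : ∀ (z : ι → Z) (a : ι) (z₁ z₂ : Z),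
      |F (update z a z₁) - F (update z a z₂)| ≤ η * ‖z₁ - z₂‖)
    (x y : ι → Z) :
    |F x - F y| ≤ η * ∑ a, ‖x a - y a‖ := by
  simpa only [piecewise_univ] using abs_sub_piecewise_le_sum_norm hF x y univ

theorem abs_sub_le_of_coordinatewise [Fintype ι]
    (hF : ∀ (z : ι → Z) (a : ι) (z₁ z₂ : Z),
      |F (update z a z₁) - F (update z a z₂)| ≤ η * ‖z₁ - z₂‖)
    (hη : 0 ≤ η) {β : ℝ} {x y : ι → Z} (hxy : ∀ a, ‖x a - y a‖ ≤ β) :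
    |F x - F y| ≤ Fintype.card ι * η * β := by
  calc |F x - F y| ≤ η * ∑ a, ‖x a - y a‖ := abs_sub_le_mul_sum_norm_of_coordinatewise hF x y
    _ ≤ η * ∑ _a : ι, β := by gcongr with a; exact hxy a
    _ = Fintype.card ι * η * β := by rw [sum_const, card_univ, nsmul_eq_mul]; ring

end CoordinatewiseLipschitz

section GreedyPolicy

variable {S U : Type*} [Fintype S] [Fintype U] [Nonempty U]

theorem abs_sum_mul_le_norm_of_stochastic {p : S → ℝ} (hp0 : ∀ s, 0 ≤ p s)
    (hp1 : ∑ s, p s = 1) (d : S → ℝ) :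
    |∑ s, p s * d s| ≤ ‖d‖ :=
  calc |∑ s, p s * d s| ≤ ∑ s, |p s * d s| := abs_sum_le_sum_abs _ _
    _ = ∑ s, p s * ‖d s‖ := by simp only [abs_mul, abs_of_nonneg (hp0 _), Real.norm_eq_abs]
    _ ≤ ∑ s, p s * ‖d‖ := by gcongr with s _; exacts [hp0 s, norm_le_pi_norm d s]
    _ = ‖d‖ := by rw [← sum_mul, hp1, one_mul]

theorem norm_le_div_of_forall_abs_le_add_mul_norm {d : S → ℝ} {c γ : ℝ} (hc : 0 ≤ c)
    (hγ0 : 0 ≤ γ) (hγ1 : γ < 1) (h : ∀ s, |d s| ≤ c + γ * ‖d‖) :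
    ‖d‖ ≤ c / (1 - γ) := by
  have hd : ‖d‖ ≤ c + γ * ‖d‖ :=
    (pi_norm_le_iff_of_nonneg (by positivity)).2 fun s => (Real.norm_eq_abs _).trans_le (h s)
  rw [le_div_iff₀ (by linarith)]
  linarith

theorem abs_sup'_sub_apply_greedy_le {Qstar Qtil : U → ℝ} {ε : ℝ}
    (hQtil : ∀ u, |Qtil u - Qstar u| ≤ ε) {v : U} (hv : ∀ u, Qtil u ≤ Qtil v) :
    |univ.sup' univ_nonempty Qstar - Qstar v| ≤ 2 * ε := by
  obtain ⟨u, -, hu⟩ := exists_mem_eq_sup' univ_nonempty Qstar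
  have hle : Qstar v ≤ univ.sup' univ_nonempty Qstar := le_sup' Qstar (mem_univ v)
  have hu' := abs_le.1 (hQtil u)
  have hv' := abs_le.1 (hQtil v)
  rw [abs_of_nonneg (sub_nonneg.2 hle), hu]
  linarith [hv u]

theorem norm_optimal_sub_greedy_value_le {γ ε : ℝ} (hγ0 : 0 ≤ γ) (hγ1 : γ < 1) (hε : 0 ≤ ε)
    {P : S → U → S → ℝ} (hP0 : ∀ s u s', 0 ≤ P s u s') (hP1 : ∀ s u, ∑ s', P s u s' = 1)
    {r Qstar Qtil : S → U → ℝ} {Vstar Vtil : S → ℝ} {π : S → U}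
    (hV : ∀ s, Vstar s = univ.sup' univ_nonempty (Qstar s))
    (hBell : ∀ s u, Qstar s u = r s u + γ * ∑ s', P s u s' * Vstar s')
    (hQtil : ∀ s u, |Qtil s u - Qstar s u| ≤ ε) (hπ : ∀ s u, Qtil s u ≤ Qtil s (π s))
    (hVtil : ∀ s, Vtil s = r s (π s) + γ * ∑ s', P s (π s) s' * Vtil s') :
    ‖Vstar - Vtil‖ ≤ 2 * ε / (1 - γ) := by
  refine norm_le_div_of_forall_abs_le_add_mul_norm (by positivity) hγ0 hγ1 fun s => ?_
  have hdiff : Qstar s (π s) - Vtil s = γ * ∑ s', P s (π s) s' * (Vstar - Vtil) s' := by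
    simp only [hBell s (π s), hVtil s, Pi.sub_apply, mul_sub, sum_sub_distrib]
    ring
  have hloss : |Vstar s - Qstar s (π s)| ≤ 2 * ε := by
    rw [hV s]
    exact abs_sup'_sub_apply_greedy_le (hQtil s) (hπ s)
  have hnext : |Qstar s (π s) - Vtil s| ≤ γ * ‖Vstar - Vtil‖ := by
    rw [hdiff, abs_mul, abs_of_nonneg hγ0]
    exact mul_le_mul_of_nonneg_left
      (abs_sum_mul_le_norm_of_stochastic (hP0 s (π s)) (hP1 s (π s)) _) hγ0
  calc |(Vstar - Vtil) s| = |(Vstar s - Qstar s (π s)) + (Qstar s (π s) - Vtil s)| := by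
        rw [Pi.sub_apply, sub_add_sub_cancel]
    _ ≤ 2 * ε + γ * ‖Vstar - Vtil‖ := (abs_add_le _ _).trans (add_le_add hloss hnext)

end GreedyPolicy

theorem stmt6_general {S U : Type*} [Fintype S] [Fintype U] [Nonempty U]
    {Z : Type*} [NormedAddCommGroup Z]
    (n : ℕ) (γ η β κ : ℝ) (hγ0 : 0 ≤ γ) (hγ1 : γ < 1)
    (hη : 0 ≤ η) (hβ : 0 ≤ β) (hκ : 0 ≤ κ)
    (P : S → U → S → ℝ) (hP0 : ∀ s u s', 0 ≤ P s u s') (hP1 : ∀ s u, ∑ s', P s u s' = 1)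
    (r : S → U → ℝ)
    (Qstar : S → U → ℝ) (Vstar : S → ℝ)
    (hV : ∀ s, Vstar s = univ.sup' univ_nonempty (Qstar s))
    (hBell : ∀ s u, Qstar s u = r s u + γ * ∑ s', P s u s' * Vstar s')
    (Q : S → U → (Fin n → Z) → ℝ) (f : S → Fin n → Z) (ztil : S → Fin n → Z)
    (hκQ : ∀ s u, |Q s u (f s) - Qstar s u| ≤ κ)
    (hLip : ∀ (s : S) (u : U) (z : Fin n → Z) (a : Fin n) (z₁ z₂ : Z),
      |Q s u (Function.update z a z₁) - Q s u (Function.update z a z₂)| ≤ η * ‖z₁ - z₂‖)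
    (hstale : ∀ s a, ‖ztil s a - f s a‖ ≤ β)
    (π : S → U) (hπ : ∀ s u, Q s u (ztil s) ≤ Q s (π s) (ztil s))
    (Vtil : S → ℝ)
    (hVtil : ∀ s, Vtil s = r s (π s) + γ * ∑ s', P s (π s) s' * Vtil s') :
    ∀ s, |Vstar s - Vtil s| ≤ 2 * (n * η * β + κ) / (1 - γ) := by
  have hQtil : ∀ s u, |Q s u (ztil s) - Qstar s u| ≤ n * η * β + κ := fun s u => by
    have hstale' : |Q s u (ztil s) - Q s u (f s)| ≤ n * η * β := by
      simpa only [Fintype.card_fin] using abs_sub_le_of_coordinatewise (hLip s u) hη (hstale s)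
    linarith [abs_sub_le (Q s u (ztil s)) (Q s u (f s)) (Qstar s u), hκQ s u]
  have hnorm := norm_optimal_sub_greedy_value_le hγ0 hγ1 (by positivity) hP0 hP1 hV hBell
    hQtil hπ hVtil
  exact fun s => (norm_le_pi_norm (Vstar - Vtil) s).trans hnorm

/-- Theorem 1 of the paper (discrete form): with approximation error `κ` at fresh
strategies, coordinate-wise Lipschitz constant `η` in strategies, and used strategies
within `β` of the fresh ones in every coordinate, the value of the greedy policy w.r.t.
`Q̃(s,u) = Q(s,u | z̃(s))` satisfies `‖V* - Ṽ‖_∞ ≤ 2(nηβ + κ)/(1-γ)`. -/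
theorem stmt6 {S U : Type*} [Fintype S] [Nonempty S] [Fintype U] [Nonempty U]
    {Z : Type*} [NormedAddCommGroup Z] [NormedSpace ℝ Z]
    (n : ℕ) (γ η β κ : ℝ) (hγ0 : 0 ≤ γ) (hγ1 : γ < 1)
    (hη : 0 ≤ η) (hβ : 0 ≤ β) (hκ : 0 ≤ κ)
    (P : S → U → S → ℝ) (hP0 : ∀ s u s', 0 ≤ P s u s') (hP1 : ∀ s u, ∑ s', P s u s' = 1)
    (r : S → U → ℝ)
    (Qstar : S → U → ℝ) (Vstar : S → ℝ)
    (hV : ∀ s, Vstar s = univ.sup' univ_nonempty (Qstar s))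
    (hBell : ∀ s u, Qstar s u = r s u + γ * ∑ s', P s u s' * Vstar s')
    (Q : S → U → (Fin n → Z) → ℝ) (f : S → Fin n → Z) (ztil : S → Fin n → Z)
    (hκQ : ∀ s u, |Q s u (f s) - Qstar s u| ≤ κ)
    (hLip : ∀ (s : S) (u : U) (z : Fin n → Z) (a : Fin n) (z₁ z₂ : Z),
      |Q s u (Function.update z a z₁) - Q s u (Function.update z a z₂)| ≤ η * ‖z₁ - z₂‖)
    (hstale : ∀ s a, ‖ztil s a - f s a‖ ≤ β)
    (π : S → U) (hπ : ∀ s u, Q s u (ztil s) ≤ Q s (π s) (ztil s))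
    (Vtil : S → ℝ)
    (hVtil : ∀ s, Vtil s = r s (π s) + γ * ∑ s', P s (π s) s' * Vtil s') :
    ∀ s, |Vstar s - Vtil s| ≤ 2 * (n * η * β + κ) / (1 - γ) :=
  stmt6_general n γ η β κ hγ0 hγ1 hη hβ hκ P hP0 hP1 r Qstar Vstar hV hBell Q f ztil hκQ hLip hstale
    π hπ Vtil hVtil
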